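/- Let p be a prime, k ≥ 2, and 0 ≤ n with m ≥ n + 2. Let χ1,…,χk be characters mod p^m, at least one of which is primitive mod p^m. If either (a) not all of χ1,…,χk are primitive mod p^m, or (b) the product character χ1⋯χk is not induced by a primitive character mod p^{m−n}, then J_{p^n}(χ1,…,χk,p^m) = 0. -/

import Mathlib

/-!
Let `χᵢ` be primitive and `c = p^(m-1)`. Since `c² = 0`, `t ↦ χᵢ(1 + ct)` is an additive
character, nontrivial by primitivity, so `∑ₜ χᵢ(a + ct) = 0` for every `a`; substituting
`xᵢ ↦ xᵢ + ct` then gives `∑ₜ J_{B+ct} = 0`. Hence `J_B = 0` as soon as `J_{B+ct} = J_B` for all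
`t`. This holds if some `χⱼ` is imprimitive, since `χⱼ` is then invariant under shifts by `c`, and
also if `ψ = ∏ χₗ` factors through `p^(m-n-1)`: for `B = p^n` we have
`B + ct = (1 + p^(m-n-1) t) B` and `ψ(1 + p^(m-n-1) t) = 1`. Otherwise `ψ` does not factor through
`p^(m-n)`, so `ψ(u) ≠ 1` for some unit `u ≡ 1 mod p^(m-n)`; as `uB = B`, the relation
`J_{uB} = ψ(u) J_B` forces `J_B = 0`.
-/

open Complex

/-- The generalized Jacobi sum `J_B(χ₁,…,χ_k, q)`:
the sum over all tuples `(x₁,…,x_k)` modulo `q` with `x₁+⋯+x_k ≡ B (mod q)`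
of `χ₁(x₁)⋯χ_k(x_k)`. -/
noncomputable def Jsum {q : ℕ} [NeZero q] {k : ℕ}
    (χ : Fin k → DirichletCharacter ℂ q) (B : ZMod q) : ℂ :=
  ∑ x : Fin k → ZMod q, if (∑ i, x i) = B then ∏ i, χ i (x i) else 0

theorem isUnit_add_iff_of_isNilpotent {R : Type*} [CommRing R] {a n : R} (hn : IsNilpotent n) :
    IsUnit (a + n) ↔ IsUnit a :=
  ⟨fun h => by simpa using hn.neg.isUnit_add_left_of_commute h (Commute.all _ _),
    fun h => hn.isUnit_add_left_of_commute h (Commute.all _ _)⟩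

theorem ZMod.isNilpotent_natCast_pow {p e : ℕ} (M : ℕ) (he : e ≠ 0) :
    IsNilpotent ((p ^ e : ℕ) : ZMod (p ^ M)) :=
  ⟨M, by
    rw [← Nat.cast_pow, ← pow_mul, ZMod.natCast_eq_zero_iff]
    exact pow_dvd_pow p (Nat.le_mul_of_pos_left M (Nat.pos_of_ne_zero he))⟩

theorem ZMod.isUnit_one_add_natCast_pow_mul {p e : ℕ} (M : ℕ) (he : e ≠ 0) (t : ZMod (p ^ M)) :
    IsUnit (1 + ((p ^ e : ℕ) : ZMod (p ^ M)) * t) :=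
  (isUnit_add_iff_of_isNilpotent
    ((Commute.all _ t).isNilpotent_mul_right (ZMod.isNilpotent_natCast_pow M he))).2 isUnit_one

theorem ZMod.natCast_dvd_of_cast_eq_zero {N d : ℕ} [NeZero N] {x : ZMod N}
    (hx : (ZMod.cast x : ZMod d) = 0) : (d : ZMod N) ∣ x := by
  rw [ZMod.cast_eq_val, ZMod.natCast_eq_zero_iff] at hx
  obtain ⟨q, hq⟩ := hx
  exact ⟨q, by rw [← ZMod.natCast_zmod_val x, hq, Nat.cast_mul]⟩

namespace MulChar

variable {R R' : Type*} [CommRing R] [CommMonoidWithZero R']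

theorem finset_prod_apply {ι : Type*} (χ : ι → MulChar R R') (s : Finset ι) {a : R}
    (ha : IsUnit a) : (∏ i ∈ s, χ i) a = ∏ i ∈ s, χ i a := by
  classical
  induction s using Finset.induction with
  | empty => simpa using one_apply ha
  | insert i s hi ih => rw [Finset.prod_insert hi, Finset.prod_insert hi, mul_apply, ih]

def addCharOneAddMul (χ : MulChar R R') {c : R} (hc : c * c = 0) : AddChar R R' where
  toFun t := χ (1 + c * t)
  map_zero_eq_one' := by simp
  map_add_eq_mul' s t := by
    rw [← map_mul]
    congr 1
    linear_combination (-s * t) * hc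

theorem sum_map_one_add_mul_eq_zero {S : Type*} [CommRing S] [IsDomain S] [Fintype R]
    (χ : MulChar R S) {c : R} (hc : c * c = 0) {t₀ : R} (ht₀ : χ (1 + c * t₀) ≠ 1) :
    ∑ t, χ (1 + c * t) = 0 :=
  AddChar.sum_eq_zero_of_ne_one (ψ := χ.addCharOneAddMul hc) (AddChar.ne_one_iff.2 ⟨t₀, ht₀⟩)

theorem sum_map_add_mul_eq_zero {S : Type*} [CommRing S] [IsDomain S] [Fintype R]
    (χ : MulChar R S) {c : R} (hc : c * c = 0) {t₀ : R} (ht₀ : χ (1 + c * t₀) ≠ 1) (a : R) :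
    ∑ t, χ (a + c * t) = 0 := by
  by_cases ha : IsUnit a
  · calc ∑ t, χ (a + c * t) = ∑ t, χ (a + c * (a * t)) :=
          (Fintype.sum_equiv (Units.mulLeft ha.unit) _ _ fun t => rfl).symm
      _ = ∑ t, χ a * χ (1 + c * t) := by
          refine Finset.sum_congr rfl fun t _ => ?_
          rw [← map_mul]
          congr 1
          ring
      _ = 0 := by rw [← Finset.mul_sum, sum_map_one_add_mul_eq_zero χ hc ht₀, mul_zero]
  · have hnil : IsNilpotent c := ⟨2, by rw [sq, hc]⟩
    refine Finset.sum_eq_zero fun t _ => map_nonunit χ ?_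
    rwa [isUnit_add_iff_of_isNilpotent ((Commute.all c t).isNilpotent_mul_right hnil)]

end MulChar

namespace DirichletCharacter

variable {R : Type*} [CommMonoidWithZero R] {N d : ℕ} {χ : DirichletCharacter R N}

theorem map_add_mul_of_factorsThrough (hχ : χ.FactorsThrough d) (hd : IsNilpotent (d : ZMod N))
    (a t : ZMod N) : χ (a + (d : ZMod N) * t) = χ a := by
  obtain ⟨hdN, χ₀, rfl⟩ := hχ
  have hnil : IsNilpotent ((d : ZMod N) * t) := (Commute.all _ t).isNilpotent_mul_right hd
  by_cases ha : IsUnit a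
  · have hat : IsUnit (a + d * t) := (isUnit_add_iff_of_isNilpotent hnil).2 ha
    have hcast : (ZMod.cast (a + (d : ZMod N) * t) : ZMod d) = ZMod.cast a := by
      simp only [← ZMod.castHom_apply (h := hdN), map_add, map_mul, map_natCast,
        ZMod.natCast_self, zero_mul, add_zero]
    calc changeLevel hdN χ₀ (a + d * t) = χ₀ (ZMod.cast (a + (d : ZMod N) * t)) :=
          changeLevel_eq_cast_of_dvd χ₀ hdN hat.unit
      _ = changeLevel hdN χ₀ a := by
          rw [hcast]
          exact (changeLevel_eq_cast_of_dvd χ₀ hdN ha.unit).symm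
  · rw [MulChar.map_nonunit _ ha,
      MulChar.map_nonunit _ (mt (isUnit_add_iff_of_isNilpotent hnil).1 ha)]

theorem exists_map_one_add_mul_ne_one [NeZero N] (hd : d ∣ N) (hχ : ¬ χ.FactorsThrough d) :
    ∃ t : ZMod N, χ (1 + d * t) ≠ 1 := by
  by_contra! h
  refine hχ ((factorsThrough_iff_ker_unitsMap hd).2 fun u hu => ?_)
  have hcast : (ZMod.cast ((u : ZMod N) - 1) : ZMod d) = 0 := by
    rw [MonoidHom.mem_ker, Units.ext_iff, ZMod.unitsMap_val] at hu
    rw [← ZMod.castHom_apply (h := hd), map_sub, map_one, ZMod.castHom_apply, hu, Units.val_one,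
      sub_self]
  obtain ⟨t, ht⟩ := ZMod.natCast_dvd_of_cast_eq_zero hcast
  rw [MonoidHom.mem_ker, Units.ext_iff, MulChar.coe_toUnitHom, Units.val_one,
    sub_eq_iff_eq_add'.1 ht]
  exact h t

variable {p M : ℕ} {χ : DirichletCharacter R (p ^ M)}

theorem factorsThrough_prime_pow_pred (hp : p.Prime) [NeZero (p ^ M)] {e : ℕ}
    (hχ : χ.FactorsThrough (p ^ e)) (hne : χ.conductor ≠ p ^ e) :
    χ.FactorsThrough (p ^ (e - 1)) := by
  obtain ⟨f, hfe, hf⟩ := (Nat.dvd_prime_pow hp).1 (conductor_dvd_of_mem_conductorSet χ hχ)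
  have hf' : f ≤ e - 1 := by
    have : f ≠ e := fun h => hne (by rw [hf, h])
    omega
  exact χ.factorsThrough_conductor.mono χ (hf ▸ pow_dvd_pow p hf')
    ((pow_dvd_pow p (Nat.sub_le e 1)).trans hχ.dvd)

theorem not_factorsThrough_prime_pow_pred_of_isPrimitive (hp : p.Prime) [NeZero (p ^ M)]
    (hM : M ≠ 0) (hχ : χ.IsPrimitive) : ¬ χ.FactorsThrough (p ^ (M - 1)) := fun h => by
  have := conductor_dvd_of_mem_conductorSet χ h
  rw [hχ, Nat.pow_dvd_pow_iff_le_right hp.one_lt] at this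
  omega

end DirichletCharacter

theorem DirichletCharacter.IsPrimitive.sum_map_add_mul_eq_zero {S : Type*} [CommRing S]
    [IsDomain S] {p M : ℕ} [NeZero (p ^ M)] (hp : p.Prime) (hM : 2 ≤ M)
    {χ : DirichletCharacter S (p ^ M)} (hχ : χ.IsPrimitive) (a : ZMod (p ^ M)) :
    ∑ t, χ (a + ((p ^ (M - 1) : ℕ) : ZMod (p ^ M)) * t) = 0 := by
  have hsq : ((p ^ (M - 1) : ℕ) : ZMod (p ^ M)) * ((p ^ (M - 1) : ℕ) : ZMod (p ^ M)) = 0 := by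
    rw [← Nat.cast_mul, ← pow_add, ZMod.natCast_eq_zero_iff]
    exact pow_dvd_pow p (by omega)
  obtain ⟨t₀, ht₀⟩ := exists_map_one_add_mul_ne_one (pow_dvd_pow p (Nat.sub_le M 1))
    (not_factorsThrough_prime_pow_pred_of_isPrimitive hp (by omega) hχ)
  exact MulChar.sum_map_add_mul_eq_zero χ hsq ht₀ a

section Jsum

open Finset

variable {N k : ℕ} [NeZero N] (χ : Fin k → DirichletCharacter ℂ N)

theorem Jsum_mul_of_isUnit {u : ZMod N} (hu : IsUnit u) (B : ZMod N) :
    Jsum χ (u * B) = (∏ i, χ i) u * Jsum χ B := by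
  rw [MulChar.finset_prod_apply χ _ hu, Jsum, Jsum, mul_sum]
  refine (Fintype.sum_equiv (MulAction.toPerm hu.unit) _ _ fun x => ?_).symm
  simp only [MulAction.toPerm_apply, Pi.smul_apply, Units.smul_def, IsUnit.unit_spec, smul_eq_mul,
    ← mul_sum, hu.mul_right_inj]
  split_ifs
  · rw [← prod_mul_distrib]
    exact prod_congr rfl fun l _ => (map_mul _ _ _).symm
  · rw [mul_zero]

theorem Jsum_add_eq_sum (i : Fin k) (B a : ZMod N) :
    Jsum χ (B + a) = ∑ x : Fin k → ZMod N,
      if ∑ l, x l = B then χ i (x i + a) * ∏ l ∈ univ.erase i, χ l (x l) else 0 := by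
  rw [Jsum]
  refine (Fintype.sum_equiv (Equiv.addRight (Pi.single i a)) _ _ fun x => ?_).symm
  simp only [Equiv.coe_addRight, Pi.add_apply, sum_add_distrib, Finset.sum_pi_single',
    if_pos (mem_univ i), add_left_inj]
  rw [← mul_prod_erase _ _ (mem_univ i), Pi.single_eq_same]
  congr 2
  exact prod_congr rfl fun l hl => by rw [Pi.single_eq_of_ne (ne_of_mem_erase hl), add_zero]

theorem Jsum_add_of_map_add (j : Fin k) {a : ZMod N} (h : ∀ x, χ j (x + a) = χ j x) (B : ZMod N) :
    Jsum χ (B + a) = Jsum χ B := by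
  rw [Jsum_add_eq_sum χ j, Jsum]
  refine sum_congr rfl fun x _ => ?_
  rw [h, mul_prod_erase _ (fun l => χ l (x l)) (mem_univ j)]

theorem sum_Jsum_add_mul_eq_zero (i : Fin k) {c : ZMod N} (h : ∀ a, ∑ t, χ i (a + c * t) = 0)
    (B : ZMod N) : ∑ t, Jsum χ (B + c * t) = 0 := by
  simp only [Jsum_add_eq_sum χ i]
  rw [sum_comm]
  refine sum_eq_zero fun x _ => ?_
  split_ifs
  · rw [← sum_mul, h, zero_mul]
  · exact sum_const_zero

theorem Jsum_eq_zero_of_Jsum_add_mul (i : Fin k) {c : ZMod N} (h : ∀ a, ∑ t, χ i (a + c * t) = 0)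
    {B : ZMod N} (hB : ∀ t, Jsum χ (B + c * t) = Jsum χ B) : Jsum χ B = 0 := by
  have hsum := sum_Jsum_add_mul_eq_zero χ i h B
  simp only [hB, sum_const, card_univ, ZMod.card, nsmul_eq_mul] at hsum
  exact (mul_eq_zero.1 hsum).resolve_left (Nat.cast_ne_zero.2 (NeZero.ne N))

theorem Jsum_eq_zero_of_map_ne_one {u B : ZMod N} (hu : IsUnit u) (huB : u * B = B)
    (hψ : (∏ i, χ i) u ≠ 1) : Jsum χ B = 0 := by
  have h := Jsum_mul_of_isUnit χ hu B
  rw [huB] at h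
  exact (mul_eq_zero.1 (by linear_combination -h : ((∏ i, χ i) u - 1) * Jsum χ B = 0)).resolve_left
    (sub_ne_zero.2 hψ)

end Jsum

open DirichletCharacter

theorem stmt0 {p m n k : ℕ} [NeZero (p ^ m)] (hp : p.Prime)
    (hm : n + 2 ≤ m)
    (χ : Fin k → DirichletCharacter ℂ (p ^ m))
    (hprim : ∃ i, (χ i).IsPrimitive)
    (h : (¬ ∀ i, (χ i).IsPrimitive) ∨ (∏ i, χ i).conductor ≠ p ^ (m - n)) :
    Jsum χ ((p ^ n : ℕ) : ZMod (p ^ m)) = 0 := by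
  obtain ⟨i, hi⟩ := hprim
  by_cases hψ : (∏ l, χ l).FactorsThrough (p ^ (m - n))
  · refine Jsum_eq_zero_of_Jsum_add_mul χ i (hi.sum_map_add_mul_eq_zero hp (by omega)) fun t => ?_
    by_cases hall : ∀ l, (χ l).IsPrimitive
    · have hψ' := factorsThrough_prime_pow_pred hp hψ (h.resolve_left (not_not.2 hall))
      have hB : ((p ^ n : ℕ) : ZMod (p ^ m)) + ((p ^ (m - 1) : ℕ) : ZMod (p ^ m)) * t
          = (1 + ((p ^ (m - n - 1) : ℕ) : ZMod (p ^ m)) * t) * ((p ^ n : ℕ) : ZMod (p ^ m)) := by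
        rw [show m - 1 = m - n - 1 + n by omega]
        push_cast
        ring
      rw [hB, Jsum_mul_of_isUnit χ (ZMod.isUnit_one_add_natCast_pow_mul m (by omega) t),
        map_add_mul_of_factorsThrough hψ' (ZMod.isNilpotent_natCast_pow m (by omega)), map_one,
        one_mul]
    · obtain ⟨j, hj⟩ := not_forall.1 hall
      have hχj := factorsThrough_prime_pow_pred hp (FactorsThrough.same_level (χ j)) hj
      exact Jsum_add_of_map_add χ j (fun x => map_add_mul_of_factorsThrough hχj
        (ZMod.isNilpotent_natCast_pow m (by omega)) x t) _
  · obtain ⟨t, ht⟩ := exists_map_one_add_mul_ne_one (pow_dvd_pow p (Nat.sub_le m n)) hψ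
    have hzero : ((p ^ (m - n) : ℕ) : ZMod (p ^ m)) * ((p ^ n : ℕ) : ZMod (p ^ m)) = 0 := by
      rw [← Nat.cast_mul, ← pow_add, Nat.sub_add_cancel (by omega), ZMod.natCast_self]
    exact Jsum_eq_zero_of_map_ne_one χ (ZMod.isUnit_one_add_natCast_pow_mul m (by omega) t)
      (by linear_combination t * hzero) ht
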